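/- arXiv:2108.02416 — 5 statements merged into one kernel-verified Lean document; each statement's English description precedes it below -/
import Mathlib

section
/- Under the weak attack, where each Byzantine worker's gradient on every file disagrees with every honest worker sharing that file, every Byzantine vertex in the detection graph G has degree at most q - 1. If q < K/2 then q - 1 < K - q - 1, so every Byzantine worker is excluded from the (unique) maximum clique, which equals the set H of honest workers. -/
/-- Weak attack: `A` is the set of the `q` Byzantine workers (`q < K/2`), `H = Aᶜ` the
honest workers. If no Byzantine is adjacent to any honest worker while honest workers
are pairwise adjacent, then every Byzantine vertex has degree at most `q - 1`,
`q - 1 < K - q - 1` (over `ℤ`), and the unique maximum clique of `G` is `H`. -/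
theorem stmt_5 (K q : ℕ) (hq : 2 * q < K) (G : SimpleGraph (Fin K))
    [DecidableRel G.Adj] (A H : Finset (Fin K)) (hA : A.card = q) (hH : H = Aᶜ)
    (hAH : ∀ a ∈ A, ∀ h ∈ H, ¬ G.Adj a h)
    (hHH : ∀ u ∈ H, ∀ v ∈ H, u ≠ v → G.Adj u v) :
    (∀ a ∈ A, G.degree a ≤ q - 1) ∧
      ((q : ℤ) - 1 < (K : ℤ) - q - 1) ∧
      (∀ M : Finset (Fin K), G.IsClique (M : Set (Fin K)) →
        (∀ C : Finset (Fin K), G.IsClique (C : Set (Fin K)) → C.card ≤ M.card) →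
        M = H) := by
  have hHcard : H.card = K - q := by
    rw [hH, Finset.card_compl, hA, Fintype.card_fin]
  refine ⟨?_, by push_cast; omega, ?_⟩
  · intro a ha
    have hsub : G.neighborFinset a ⊆ A.erase a := by
      intro x hx
      rw [SimpleGraph.mem_neighborFinset] at hx
      refine Finset.mem_erase.mpr ⟨fun h => G.irrefl (h ▸ hx), ?_⟩
      by_contra hxA
      exact hAH a ha x (by rw [hH]; exact Finset.mem_compl.mpr hxA) hx
    calc G.degree a = (G.neighborFinset a).card := rfl
      _ ≤ (A.erase a).card := Finset.card_le_card hsub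
      _ ≤ q - 1 := by rw [Finset.card_erase_of_mem ha, hA]
  · intro M hM hmax
    have hHclique : G.IsClique (H : Set (Fin K)) := fun u hu v hv huv => hHH u hu v hv huv
    have hMcard : (K - q : ℕ) ≤ M.card := hHcard ▸ hmax H hHclique
    have hMsub : M ⊆ H := by
      intro x hxM
      by_contra hxH
      have hxA : x ∈ A := by
        rw [hH, Finset.mem_compl] at hxH; simpa using hxH
      have hMA : M ⊆ A := by
        intro y hyM
        by_cases hyx : y = x
        · exact hyx ▸ hxA
        · by_contra hyA
          have hyH : y ∈ H := by rw [hH]; exact Finset.mem_compl.mpr hyA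
          exact hAH x hxA y hyH (hM hxM hyM (Ne.symm hyx))
      have := Finset.card_le_card hMA
      omega
    exact Finset.eq_of_subset_of_card_le hMsub (by omega)
end

section
/- (Optimality, Theorem 1 upper bound) Let r be odd, r' = (r+1)/2, A a set of q adversaries, and for each adversary i a disagreement set D_i with |D_i| ≤ q. Define X_j (for r' ≤ j ≤ r) as the set of r-subsets F for which there exists A' ⊆ A ∩ F with |A'| = j and every member of F \ A' lies in ∩_{i∈A'} D_i. Then |X_j| ≤ C(q,j)·C(q,r-j), and hence |∪_{j=r'}^{r} X_j| ≤ ∑_{j=r'}^{r} C(q,j)·C(q,r-j) ≤ (1/2)·C(2q,r). -/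
/-!
A corrupted file `F` with `j ≥ 1` agreeing adversaries `A'` is determined by `A'` (at most
`C(q, j)` choices) together with `F \ A'`, an `(r - j)`-subset of `⋂_{i ∈ A'} D i`, which lies
inside a single `D i` and so has at most `C(q, r - j)` choices. By Vandermonde,
`∑_{j ≤ r} C(q, j) C(q, r - j) = C(2q, r)`, and for odd `r` the reflection `j ↦ r - j`
swaps the terms with `j ≥ (r + 1) / 2` and those with `j < (r + 1) / 2`.
-/

open Finset

section AgreeingSets

variable {α : Type*} [Fintype α] [DecidableEq α]

lemma card_inf_le_of_subset {A B : Finset α} {D : α → Finset α} {q : ℕ}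
    (hD : ∀ i ∈ A, #(D i) ≤ q) (hBA : B ⊆ A) (hB : B.Nonempty) : #(B.inf D) ≤ q := by
  obtain ⟨i, hi⟩ := hB
  exact (card_le_card (inf_le hi)).trans (hD i (hBA hi))

lemma card_le_choose_mul_choose_of_agreeing {A : Finset α} {D : α → Finset α} {q r j : ℕ}
    (hj : 0 < j) (hD : ∀ i ∈ A, #(D i) ≤ q) (S : Finset (Finset α))
    (hS : ∀ F ∈ S, #F = r ∧
      ∃ A' ∈ (A ∩ F).powersetCard j, ∀ w ∈ F \ A', ∀ i ∈ A', w ∈ D i) :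
    #S ≤ (#A).choose j * q.choose (r - j) := by
  have hcover : S ⊆ (A.powersetCard j).biUnion
      fun B => ((B.inf D).powersetCard (r - j)).image (B ∪ ·) := by
    intro F hF
    obtain ⟨hFr, A', hA', hagree⟩ := hS F hF
    obtain ⟨hA'AF, hA'j⟩ := mem_powersetCard.mp hA'
    have hA'F : A' ⊆ F := hA'AF.trans inter_subset_right
    refine mem_biUnion.mpr ⟨A', mem_powersetCard.mpr ⟨hA'AF.trans inter_subset_left, hA'j⟩, ?_⟩
    refine mem_image.mpr ⟨F \ A', mem_powersetCard.mpr ⟨?_, ?_⟩, union_sdiff_of_subset hA'F⟩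
    · exact fun w hw => Finset.mem_inf.mpr (hagree w hw)
    · rw [card_sdiff_of_subset hA'F, hFr, hA'j]
  calc #S ≤ ∑ B ∈ A.powersetCard j, #(((B.inf D).powersetCard (r - j)).image (B ∪ ·)) :=
        (card_le_card hcover).trans card_biUnion_le
    _ ≤ ∑ _B ∈ A.powersetCard j, q.choose (r - j) := by
        refine sum_le_sum fun B hB => ?_
        obtain ⟨hBA, hBj⟩ := mem_powersetCard.mp hB
        have hBne : B.Nonempty := card_pos.mp (hBj ▸ hj)
        calc _ ≤ #((B.inf D).powersetCard (r - j)) := card_image_le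
          _ = (#(B.inf D)).choose (r - j) := card_powersetCard _ _
          _ ≤ q.choose (r - j) := Nat.choose_le_choose _ (card_inf_le_of_subset hD hBA hBne)
    _ = (#A).choose j * q.choose (r - j) := by
        rw [sum_const, card_powersetCard, smul_eq_mul]

end AgreeingSets

lemma sum_choose_mul_choose_eq_choose_two_mul (q r : ℕ) :
    ∑ j ∈ range (r + 1), q.choose j * q.choose (r - j) = (2 * q).choose r := by
  rw [two_mul, Nat.add_choose_eq]
  exact (Nat.sum_antidiagonal_eq_sum_range_succ_mk (fun p => q.choose p.1 * q.choose p.2) r).symm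

lemma sum_range_eq_two_mul_sum_Icc_of_reflect {M : Type*} [AddCommMonoid M] (f : ℕ → M)
    {r : ℕ} (hodd : Odd r) (hf : ∀ j ≤ r, f (r - j) = f j) :
    ∑ j ∈ range (r + 1), f j = 2 • ∑ j ∈ Icc ((r + 1) / 2) r, f j := by
  obtain ⟨m, rfl⟩ := hodd
  have hhalf : (2 * m + 1 + 1) / 2 = m + 1 := by omega
  have hlower : ∑ j ∈ range (m + 1), f j = ∑ j ∈ Icc (m + 1) (2 * m + 1), f j := by
    refine sum_nbij' (2 * m + 1 - ·) (2 * m + 1 - ·) ?_ ?_ ?_ ?_ ?_ <;>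
      intro j hj <;> simp only [mem_range, mem_Icc] at hj ⊢
    · omega
    · omega
    · omega
    · omega
    · exact (hf j (by omega)).symm
  rw [hhalf, two_smul, ← sum_range_add_sum_Ico f (by omega : m + 1 ≤ 2 * m + 1 + 1), hlower,
    Ico_add_one_right_eq_Icc]

lemma two_mul_sum_Icc_choose_mul_choose {r : ℕ} (hodd : Odd r) (q : ℕ) :
    2 * ∑ j ∈ Icc ((r + 1) / 2) r, q.choose j * q.choose (r - j) = (2 * q).choose r := by
  rw [← sum_choose_mul_choose_eq_choose_two_mul, ← smul_eq_mul,
    sum_range_eq_two_mul_sum_Icc_of_reflect _ hodd]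
  intro j hj
  rw [Nat.sub_sub_self hj, mul_comm]

open Classical in
/-- Theorem 1 upper bound: with `r` odd, `r' = (r+1)/2`, adversary set `A` of size `q`,
and disagreement sets `D i` of size at most `q`, the set `X j` of `r`-subsets `F`
admitting a set `A' ⊆ A ∩ F` of `j` active adversaries with `F \ A' ⊆ ∩_{i∈A'} D i`
satisfies `|X j| ≤ C(q,j)·C(q,r-j)`, hence
`|∪_{j=r'}^{r} X j| ≤ ∑_{j=r'}^{r} C(q,j)·C(q,r-j) ≤ (1/2)·C(2q,r)`. -/
theorem stmt_10 (K r q : ℕ) (hodd : Odd r) (A : Finset (Fin K)) (hA : A.card = q)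
    (D : Fin K → Finset (Fin K)) (hD : ∀ i ∈ A, (D i).card ≤ q)
    (X : ℕ → Finset (Finset (Fin K)))
    (hX : ∀ j, X j = ((Finset.univ : Finset (Fin K)).powersetCard r).filter
        (fun F => ∃ A' ∈ (A ∩ F).powersetCard j, ∀ w ∈ F \ A', ∀ i ∈ A', w ∈ D i)) :
    (∀ j ∈ Finset.Icc ((r + 1) / 2) r, (X j).card ≤ q.choose j * q.choose (r - j)) ∧
      ((Finset.Icc ((r + 1) / 2) r).biUnion X).card
        ≤ ∑ j ∈ Finset.Icc ((r + 1) / 2) r, q.choose j * q.choose (r - j) ∧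
      2 * ∑ j ∈ Finset.Icc ((r + 1) / 2) r, q.choose j * q.choose (r - j)
        ≤ (2 * q).choose r := by
  have hXj : ∀ j ∈ Icc ((r + 1) / 2) r, #(X j) ≤ q.choose j * q.choose (r - j) := by
    intro j hj
    have hj0 : 0 < j := by have := hodd.pos; simp only [mem_Icc] at hj; omega
    rw [← hA]
    refine card_le_choose_mul_choose_of_agreeing hj0 (hA ▸ hD) (X j) fun F hF => ?_
    rw [hX, mem_filter, mem_powersetCard] at hF
    exact ⟨hF.1.2, hF.2⟩
  exact ⟨hXj, card_biUnion_le.trans (sum_le_sum hXj),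
    (two_mul_sum_Icc_choose_mul_choose hodd q).le⟩
end

section
/- Under the optimal fixed-disagreement attack (all q adversaries A disagree exactly with a fixed q-subset D of honest workers, 2q < K), the detection graph G contains at least two distinct cliques of size K - q: the set H of all honest workers, and (H \ D) ∪ A. Hence the maximum clique of G is not unique. -/
/-- Under the optimal fixed-disagreement attack (`A` the `q ≥ 1` adversaries,
`H = Aᶜ` the honest workers, `D ⊆ H` with `|D| = q` the disagreement set, `2q < K`),
the detection graph contains two distinct cliques of size `K - q`, namely `H` and
`(H \ D) ∪ A`, and no clique is larger; hence the maximum clique is not unique. -/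
theorem stmt_12 (K q : ℕ) (hq : 1 ≤ q) (hK : 2 * q < K) (G : SimpleGraph (Fin K))
    (A H D : Finset (Fin K)) (hA : A.card = q) (hH : H = Aᶜ)
    (hD : D ⊆ H) (hDcard : D.card = q)
    (hAA : ∀ a ∈ A, ∀ b ∈ A, a ≠ b → G.Adj a b)
    (hHH : ∀ u ∈ H, ∀ v ∈ H, u ≠ v → G.Adj u v)
    (hAHD : ∀ a ∈ A, ∀ h ∈ H \ D, G.Adj a h)
    (hAD : ∀ a ∈ A, ∀ d ∈ D, ¬ G.Adj a d) :
    G.IsClique (H : Set (Fin K)) ∧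
      G.IsClique (((H \ D) ∪ A : Finset (Fin K)) : Set (Fin K)) ∧
      H.card = K - q ∧ ((H \ D) ∪ A).card = K - q ∧ H ≠ (H \ D) ∪ A ∧
      (∀ C : Finset (Fin K), G.IsClique (C : Set (Fin K)) → C.card ≤ K - q) := by
  have hHcard : H.card = K - q := by
    rw [hH, Finset.card_compl, hA, Fintype.card_fin]
  have hAH : ∀ a ∈ A, a ∉ H := by
    intro a ha
    simp [hH, ha]
  have hdisj : Disjoint (H \ D) A := by
    refine Finset.disjoint_left.mpr ?_
    intro x hx hxA
    exact hAH x hxA (Finset.mem_sdiff.mp hx).1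
  have hUcard : ((H \ D) ∪ A).card = K - q := by
    rw [Finset.card_union_of_disjoint hdisj, Finset.card_sdiff_of_subset hD, hHcard, hDcard, hA]
    omega
  refine ⟨?_, ?_, hHcard, hUcard, ?_, ?_⟩
  · intro u hu v hv huv
    exact hHH u hu v hv huv
  · intro u hu v hv huv
    simp only [Finset.coe_union, Set.mem_union, Finset.mem_coe] at hu hv
    rcases hu with hu | hu <;> rcases hv with hv | hv
    · exact hHH u (Finset.mem_sdiff.mp hu).1 v (Finset.mem_sdiff.mp hv).1 huv
    · exact (hAHD v hv u hu).symm
    · exact hAHD u hu v hv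
    · exact hAA u hu v hv huv
  · intro heq
    obtain ⟨d, hd⟩ := Finset.card_pos.mp (by omega : 0 < D.card)
    have hdH : d ∈ H := hD hd
    rw [heq] at hdH
    rcases Finset.mem_union.mp hdH with h | h
    · exact (Finset.mem_sdiff.mp h).2 hd
    · exact hAH d h (hD hd)
  · intro C hC
    by_cases hCA : ∃ a ∈ C, a ∈ A
    · obtain ⟨a, haC, haA⟩ := hCA
      have hCD : ∀ d ∈ D, d ∉ C := by
        intro d hdD hdC
        have hne : a ≠ d := by
          rintro rfl; exact hAH a haA (hD hdD)
        exact hAD a haA d hdD (hC haC hdC hne)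
      have : C ⊆ Dᶜ := fun x hx => Finset.mem_compl.mpr (fun hxD => hCD x hxD hx)
      calc C.card ≤ Dᶜ.card := Finset.card_le_card this
        _ = K - q := by rw [Finset.card_compl, hDcard, Fintype.card_fin]
    · push_neg at hCA
      have : C ⊆ H := fun x hx => by
        rw [hH]; exact Finset.mem_compl.mpr (hCA x hx)
      calc C.card ≤ H.card := Finset.card_le_card this
        _ = K - q := hHcard
end

section
/- For DETOX with K workers split into K/r groups of size r (r odd, r' = (r+1)/2) and majority voting per group, the optimal placement of q adversaries corrupts exactly ⌊q/r'⌋ groups; i.e., the maximum, over choices of a q-subset of workers, of the number of groups containing at least r' chosen workers equals min(⌊q/r'⌋, K/r) = ⌊q/r'⌋ when q < K/2. -/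
/-- DETOX optimal attack: `K = g·r` workers are partitioned into `g` groups of size
`r` (`r` odd, `r' = (r+1)/2`, `q < K/2`). The maximum, over `q`-subsets `S` of the
workers, of the number of groups containing at least `r'` members of `S` equals
`⌊q/r'⌋`. -/
theorem stmt_13 (g r q : ℕ) (hodd : Odd r) (K : ℕ) (hK : K = g * r)
    (hq : 2 * q < K) (gp : Fin K → Fin g)
    (hgp : ∀ j : Fin g, ((Finset.univ : Finset (Fin K)).filter (fun w => gp w = j)).card = r) :
    ((Finset.univ : Finset (Fin K)).powersetCard q).sup
        (fun S => ((Finset.univ : Finset (Fin g)).filter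
          (fun j => (r + 1) / 2 ≤ (S.filter (fun w => gp w = j)).card)).card)
      = q / ((r + 1) / 2) := by
  obtain ⟨k, hk⟩ := hodd
  set r' := (r + 1) / 2 with hr'
  have hrpos : 0 < r := by omega
  have hr'pos : 0 < r' := by omega
  have hr'le : r' ≤ r := by omega
  set m := q / r' with hm
  apply le_antisymm
  · -- upper bound
    apply Finset.sup_le
    intro S hS
    rw [Finset.mem_powersetCard] at hS
    obtain ⟨-, hScard⟩ := hS
    rw [Nat.le_div_iff_mul_le hr'pos]
    set C := (Finset.univ : Finset (Fin g)).filter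
          (fun j => r' ≤ (S.filter (fun w => gp w = j)).card) with hC
    calc C.card * r' ≤ ∑ j ∈ C, (S.filter (fun w => gp w = j)).card := by
          simpa using Finset.card_nsmul_le_sum C _ r'
            (fun j hj => (Finset.mem_filter.mp hj).2)
      _ ≤ ∑ j ∈ (Finset.univ : Finset (Fin g)), (S.filter (fun w => gp w = j)).card :=
          Finset.sum_le_sum_of_subset (Finset.filter_subset _ _)
      _ = S.card := (Finset.card_eq_sum_card_fiberwise (fun x _ => Finset.mem_univ (gp x))).symm
      _ = q := hScard
  · -- lower bound: construct a witness
    have hmg : m < g := by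
      have h1 : m * r' ≤ q := Nat.div_mul_le_self q r'
      have hg : 0 < g := by
        rcases Nat.eq_zero_or_pos g with h | h
        · subst h; simp at hK; omega
        · exact h
      have h2 : 2 * r' = r + 1 := by omega
      have h4 : g * r < g * (r + 1) := (Nat.mul_lt_mul_left hg).mpr (by omega)
      have h5 : 2 * (g * r') = g * (r + 1) := by rw [← h2]; ring
      have h3 : 2 * (m * r') < 2 * (g * r') := by omega
      exact Nat.lt_of_mul_lt_mul_right (show m * r' < g * r' by omega)
    have hqK : q ≤ K := by omega
    -- choose m groups
    obtain ⟨T, hTsub, hTcard⟩ := Finset.exists_subset_card_eq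
      (le_of_lt (by simpa using hmg) : m ≤ (Finset.univ : Finset (Fin g)).card)
    -- for each group choose r' members
    have hA : ∀ j : Fin g, ∃ A ⊆ (Finset.univ : Finset (Fin K)).filter (fun w => gp w = j),
        A.card = r' := by
      intro j
      exact Finset.exists_subset_card_eq (by rw [hgp j]; exact hr'le)
    choose A hAsub hAcard using hA
    set S0 := T.biUnion A with hS0
    have hS0card : S0.card = m * r' := by
      rw [hS0, Finset.card_biUnion, Finset.sum_congr rfl (fun j _ => hAcard j),
        Finset.sum_const, hTcard, smul_eq_mul]
      intro i _ j _ hij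
      apply Finset.disjoint_left.mpr
      intro a ha ha'
      have h1 := (Finset.mem_filter.mp (hAsub i ha)).2
      have h2 := (Finset.mem_filter.mp (hAsub j ha')).2
      exact hij (h1 ▸ h2 ▸ rfl)
    have hS0le : S0.card ≤ q := by rw [hS0card]; exact Nat.div_mul_le_self q r'
    obtain ⟨S, hS0S, hSsub, hScard⟩ := Finset.exists_subsuperset_card_eq
      (Finset.subset_univ S0) (hS0le.trans (le_refl q)) (by simpa [Finset.card_univ] using hqK)
    have hmem : S ∈ (Finset.univ : Finset (Fin K)).powersetCard q :=
      Finset.mem_powersetCard.mpr ⟨hSsub, hScard⟩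
    have hTm : m ≤ ((Finset.univ : Finset (Fin g)).filter
          (fun j => r' ≤ (S.filter (fun w => gp w = j)).card)).card := by
      rw [← hTcard]
      apply Finset.card_le_card
      intro j hj
      rw [Finset.mem_filter]
      refine ⟨Finset.mem_univ _, ?_⟩
      rw [← hAcard j]
      apply Finset.card_le_card
      intro a ha
      rw [Finset.mem_filter]
      exact ⟨hS0S (Finset.mem_biUnion.mpr ⟨j, hj, ha⟩),
        (Finset.mem_filter.mp (hAsub j ha)).2⟩
    exact le_trans hTm (Finset.le_sup (f := fun S => ((Finset.univ : Finset (Fin g)).filter (fun j => r' ≤ (S.filter (fun w => gp w = j)).card)).card) hmem)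
end

section
/- For DETOX under the weak round-robin placement of q adversaries into K/r groups (adversary i assigned to group i mod (K/r)), the number of groups with at least r' adversaries is max(0, q - (K/r)(r'-1)) when q ≤ (K/r)·r'. -/
/-- DETOX weak round-robin attack: `q` adversaries are spread round-robin over the
`g = K/r` groups, so group `j` receives `⌊q/g⌋ + 1` adversaries if `j < q mod g` and
`⌊q/g⌋` otherwise. With `r` odd, `r' = (r+1)/2` and `q ≤ g·r'`, the number of groups
with at least `r'` adversaries is `max(0, q - g·(r'-1))` (truncated subtraction). -/
theorem stmt_14 (g r q : ℕ) (hodd : Odd r) (hg : 1 ≤ g)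
    (hq : q ≤ g * ((r + 1) / 2)) :
    ((Finset.univ : Finset (Fin g)).filter
        (fun j : Fin g => (r + 1) / 2 ≤ q / g + (if (j : ℕ) < q % g then 1 else 0))).card
      = q - g * ((r + 1) / 2 - 1) := by
  set a := (r + 1) / 2 with ha
  have ha1 : 1 ≤ a := by
    obtain ⟨t, rfl⟩ := hodd; omega
  have hm : q % g < g := Nat.mod_lt _ hg
  have hdm : g * (q / g) + q % g = q := Nat.div_add_mod q g
  have hsplit : g * a = g * (a - 1) + g := by
    conv_lhs => rw [show a = (a - 1) + 1 by omega]
    ring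
  rcases lt_or_ge (q / g) (a - 1) with h | h
  · have h0 : ∀ j : Fin g, ¬ (a ≤ q / g + (if (j : ℕ) < q % g then 1 else 0)) := by
      intro j; split <;> omega
    rw [Finset.filter_false_of_mem (fun j _ => h0 j), Finset.card_empty]
    have hlt : q < g * (a - 1) := by
      calc q = g * (q / g) + q % g := hdm.symm
        _ < g * (q / g) + g := by omega
        _ = g * (q / g + 1) := by ring
        _ ≤ g * (a - 1) := Nat.mul_le_mul_left _ (by omega)
    omega
  rcases lt_or_ge (q / g) a with h2 | h2
  · have hk : q / g = a - 1 := by omega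
    have hcongr : ∀ j : Fin g, j ∈ Finset.univ →
        ((a ≤ q / g + (if (j : ℕ) < q % g then 1 else 0)) ↔ ((j : ℕ) < q % g)) := by
      intro j _; split <;> simp_all <;> omega
    rw [Finset.filter_congr hcongr]
    have hcard : (Finset.univ.filter (fun j : Fin g => (j : ℕ) < q % g)).card = q % g := by
      have : (Finset.univ.filter (fun j : Fin g => (j : ℕ) < q % g))
          = Finset.Iio (⟨q % g, hm⟩ : Fin g) := by
        ext j
        simp [Fin.lt_def]
      rw [this, Fin.card_Iio]
    · rw [hk] at hdm; rw [hcard]; omega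
  · -- all groups have at least a adversaries
    have hge : g * a ≤ g * (q / g) := Nat.mul_le_mul_left _ h2
    have h1 : ∀ j : Fin g, (a ≤ q / g + (if (j : ℕ) < q % g then 1 else 0)) := by
      intro j; split <;> omega
    rw [Finset.filter_true_of_mem (fun j _ => h1 j), Finset.card_univ, Fintype.card_fin]
    omega
end
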